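/- Let U = ⊕̂_{n} U_n be a unitary representation of a group G given as a Hilbert direct sum over an increasing sequence of closed G-invariant subspaces U_N (U = closure of ∪_N U_N). Let T : U' → V be a continuous G-homomorphism into a G-representation V of finite length, and W the closure of the image. If W' is a closed G-invariant subspace of W containing T(U_N') for all N (where U_N' denotes the corresponding subspaces of the domain), then W' = W; consequently W equals the closure of T(U_N') for some single N. -/

import Mathlib

/-! A closed subspace containing every `T(U_N)` contains `T` of the dense subspace `⋃ U_N`,
hence, by continuity of `T`, the closure of the whole image. The closures of the `T(U_N)` form an
increasing chain of closed invariant subspaces of `V`, which stabilises at some `N` because `V`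
has finite length; its stable value then contains every `T(U_n)`, so it is the whole closure. -/

open Set Submodule

section

variable {R M N : Type*} [Semiring R]
  [AddCommMonoid M] [Module R M]
  [AddCommMonoid N] [Module R N] [TopologicalSpace N] [ContinuousAdd N] [ContinuousConstSMul R N]

theorem LinearMap.topologicalClosure_range_le_of_dense_iSup [TopologicalSpace M] {ι : Sort*}
    {T : M →ₗ[R] N}
    (hT : Continuous T) {S : ι → Submodule R M} (hS : Dense ((⨆ i, S i : Submodule R M) : Set M))
    {W : Submodule R N} (hW : IsClosed (W : Set N)) (hSW : ∀ i, (S i).map T ≤ W) :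
    (LinearMap.range T).topologicalClosure ≤ W := by
  have hmap : (⨆ i, S i).map T ≤ W := by
    rw [Submodule.map_iSup]
    exact iSup_le hSW
  refine topologicalClosure_minimal _ ?_ hW
  rintro _ ⟨u, rfl⟩
  exact hW.closure_subset (map_mem_closure hT (hS u) fun x hx => hmap (mem_map_of_mem hx))

theorem LinearMap.mapsTo_topologicalClosure_map {T : M →ₗ[R] N} {S : Submodule R M}
    {f : M → M} {g : N → N} (hg : Continuous g) (hf : MapsTo f S S)
    (hfg : ∀ u, T (f u) = g (T u)) :
    MapsTo g ((S.map T).topologicalClosure : Set N) ((S.map T).topologicalClosure : Set N) := by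
  refine MapsTo.closure ?_ hg
  rintro _ ⟨u, hu, rfl⟩
  exact ⟨f u, hf hu, hfg u⟩

end

theorem Monotone.le_of_forall_ge_eq {α : Type*} [Preorder α] {C : ℕ → α} (hC : Monotone C)
    {N : ℕ} (hN : ∀ n, N ≤ n → C n = C N) (n : ℕ) : C n ≤ C N := by
  rcases le_total n N with h | h
  · exact hC h
  · exact (hN n h).le

/-- Exhaustion lemma for discretely decomposable representations.  Let `U'` carry a
(continuous) linear `G`-action with an increasing family of invariant subspaces `UN n`
whose union is dense, let `V` be a continuous `G`-representation of finite length (its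
closed invariant subspaces satisfy the ascending chain condition `hacc`), and let `T` be
a continuous equivariant linear map.  Set `W := closure T(U')`.  Then (1) any closed
`G`-invariant subspace `W' ⊆ W` containing all `T(UN n)` equals `W`; consequently
(2) `W` equals the closure of `T(UN N)` for some single `N`. -/
theorem stmt_18 {G : Type*} [Group G]
    {U' : Type*} [AddCommGroup U'] [Module ℂ U'] [TopologicalSpace U']
    {V : Type*} [AddCommGroup V] [Module ℂ V] [TopologicalSpace V]
    [IsTopologicalAddGroup V] [ContinuousConstSMul ℂ V]
    (ρU : G →* (U' ≃ₗ[ℂ] U')) (ρV : G →* (V ≃ₗ[ℂ] V))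
    (hρVcont : ∀ g : G, Continuous (ρV g))
    (T : U' →ₗ[ℂ] V) (hTcont : Continuous T)
    (hTequiv : ∀ (g : G) (u : U'), T (ρU g u) = ρV g (T u))
    (UN : ℕ → Submodule ℂ U') (hmono : Monotone UN)
    (hUNinv : ∀ (n : ℕ) (g : G), ∀ u ∈ UN n, ρU g u ∈ UN n)
    (hdense : Dense ((↑(⨆ n, UN n) : Set U')))
    (hacc : ∀ C : ℕ → Submodule ℂ V, Monotone C →
      (∀ n, IsClosed ((C n : Set V))) →
      (∀ (n : ℕ) (g : G), ∀ v ∈ C n, ρV g v ∈ C n) →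
      ∃ N, ∀ n, N ≤ n → C n = C N) :
    (∀ W' : Submodule ℂ V, IsClosed ((W' : Set V)) →
      (∀ g : G, ∀ v ∈ W', ρV g v ∈ W') →
      (∀ n : ℕ, ∀ u ∈ UN n, T u ∈ W') →
      W' ≤ (LinearMap.range T).topologicalClosure →
      W' = (LinearMap.range T).topologicalClosure) ∧
    ∃ N : ℕ, ((UN N).map T).topologicalClosure
        = (LinearMap.range T).topologicalClosure := by
  have hexhaust : ∀ W' : Submodule ℂ V, IsClosed (W' : Set V) → (∀ n, (UN n).map T ≤ W') →
      (LinearMap.range T).topologicalClosure ≤ W' := fun W' hW' =>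
    T.topologicalClosure_range_le_of_dense_iSup hTcont hdense hW'
  refine ⟨fun W' hW' _ hUW' hle =>
    le_antisymm hle (hexhaust W' hW' fun n => map_le_iff_le_comap.2 (hUW' n)), ?_⟩
  set C : ℕ → Submodule ℂ V := fun n => ((UN n).map T).topologicalClosure
  have hCmono : Monotone C := fun m n h => topologicalClosure_mono (map_mono (hmono h))
  obtain ⟨N, hN⟩ := hacc C hCmono (fun n => isClosed_topologicalClosure _) fun n g =>
    T.mapsTo_topologicalClosure_map (hρVcont g) (hUNinv n g) (hTequiv g)
  refine ⟨N, le_antisymm (topologicalClosure_mono LinearMap.map_le_range) ?_⟩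
  exact hexhaust (C N) (isClosed_topologicalClosure _) fun n =>
    (le_topologicalClosure _).trans (hCmono.le_of_forall_ge_eq hN n)
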